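/- arXiv:1902.02931 — 6 statements merged into one kernel-verified Lean document; each statement's English description precedes it below -/
import Mathlib

section
/- For every integer n ≥ 2 and every real λ ∈ [0,1], the inequality ∑_{j=0}^{n} λ^j − ∑_{k=1}^{n−1} M(⌊(n−1)/k⌋)·(∑_{j=0}^{n−k} λ^j) ≥ 0 holds, with equality if and only if λ = 0. -/
open Finset Real

def Mertens (N : ℕ) : ℤ := ∑ i ∈ Finset.Icc 1 N, ArithmeticFunction.moebius i

/-!
Write `G_m(λ) = ∑_{j ≤ m} λ^j` and `N = n - 1`. The tail `G_n - G_{n-q} = λ^{n-q+1} + ⋯ + λ^n`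
equals the Newton series `T(q) = ∑_{j < q} C(q, j+1) λ^{n-j} (1-λ)^j`, and `∑_{k ≤ N} M(N/k) = 1`,
so the expression is `∑_{k ≤ N} M(N/k) T(k) = ∑_{m ≤ N} (T * μ)(m)`. Since
`∑_{d ∣ m} μ(d) C(m/d, j)` counts the `j`-subsets of `{1, …, m}` whose gcd is coprime to `m`,
each `(T * μ)(m)` is a nonnegative combination of the `λ^{n-j} (1-λ)^j`, and `(T * μ)(1) = λ^n`.
Hence the expression is at least `λ^n`, while at `λ = 0` it is `1 - ∑_{k ≤ N} M(N/k) = 0`.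
-/

open ArithmeticFunction
open scoped ArithmeticFunction.Moebius ArithmeticFunction.zeta

theorem sum_divisors_moebius (n : ℕ) : ∑ d ∈ n.divisors, μ d = if n = 1 then 1 else 0 := by
  rw [← coe_mul_zeta_apply, moebius_mul_coe_zeta, one_apply]

theorem sum_divisors_moebius_mul_card_filter_dvd {α : Type*} (s : Finset α) (g : α → ℕ)
    {m : ℕ} (hm : m ≠ 0) :
    ∑ d ∈ m.divisors, μ d * #{a ∈ s | d ∣ g a} = #{a ∈ s | (g a).Coprime m} := by
  simp_rw [natCast_card_filter, mul_sum, mul_ite, mul_one, mul_zero]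
  rw [sum_comm]
  refine sum_congr rfl fun a _ => ?_
  have hdiv : {d ∈ m.divisors | d ∣ g a} = (Nat.gcd (g a) m).divisors := by
    rw [← Nat.divisors_filter_dvd_of_dvd hm (Nat.gcd_dvd_right _ _)]
    refine filter_congr fun d hd => ?_
    rw [Nat.dvd_gcd_iff, and_iff_left (Nat.dvd_of_mem_divisors hd)]
  rw [← sum_filter, hdiv, sum_divisors_moebius]

theorem card_filter_dvd_gcd_powersetCard_Ioc (m d j : ℕ) :
    #{S ∈ (Ioc 0 m).powersetCard j | d ∣ S.gcd id} = (m / d).choose j := by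
  rw [← Nat.Ioc_filter_dvd_card_eq_div, ← card_powersetCard]
  congr 1
  ext S
  simp only [mem_filter, mem_powersetCard, Finset.dvd_gcd_iff, id, subset_iff]
  grind

theorem sum_divisors_moebius_mul_choose {m : ℕ} (hm : m ≠ 0) (j : ℕ) :
    ∑ d ∈ m.divisors, μ d * (m / d).choose j
      = #{S ∈ (Ioc 0 m).powersetCard j | (S.gcd id).Coprime m} := by
  simp_rw [← card_filter_dvd_gcd_powersetCard_Ioc m _ j]
  exact sum_divisors_moebius_mul_card_filter_dvd _ _ hm

theorem sum_divisors_moebius_mul_choose_nonneg (m j : ℕ) :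
    0 ≤ ∑ d ∈ m.divisors, μ d * (m / d).choose j := by
  rcases eq_or_ne m 0 with rfl | hm
  · simp
  · rw [sum_divisors_moebius_mul_choose hm]
    positivity

section newtonSeries

variable {R : Type*}

def newtonSeries [Semiring R] (a : ℕ → R) : ArithmeticFunction R :=
  ⟨fun q => ∑ j ∈ range q, (q.choose (j + 1) : R) * a j, by simp⟩

theorem newtonSeries_apply [Semiring R] (a : ℕ → R) (q : ℕ) :
    newtonSeries a q = ∑ j ∈ range q, (q.choose (j + 1) : R) * a j := rfl

theorem newtonSeries_apply_of_le [Semiring R] (a : ℕ → R) {q K : ℕ} (hqK : q ≤ K) :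
    newtonSeries a q = ∑ j ∈ range K, (q.choose (j + 1) : R) * a j := by
  refine sum_subset (range_subset_range.2 hqK) fun j _ hj => ?_
  rw [Nat.choose_eq_zero_of_lt (by simp at hj; omega), Nat.cast_zero, zero_mul]

theorem newtonSeries_mul_moebius_nonneg [CommRing R] [PartialOrder R] [IsOrderedRing R]
    {a : ℕ → R} (ha : ∀ j, 0 ≤ a j) (m : ℕ) : 0 ≤ (newtonSeries a * μ) m := by
  have hswap : (newtonSeries a * μ) m
      = ∑ j ∈ range m, ((∑ d ∈ m.divisors, μ d * (m / d).choose (j + 1) : ℤ) : R) * a j := by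
    rw [mul_comm, mul_apply,
      Nat.sum_divisorsAntidiagonal fun d e => (μ : ArithmeticFunction R) d * newtonSeries a e]
    simp_rw [newtonSeries_apply_of_le a (Nat.div_le_self m _), mul_sum, intCoe_apply]
    rw [sum_comm]
    push_cast
    simp_rw [sum_mul, mul_assoc]
  rw [hswap]
  exact sum_nonneg fun j _ =>
    mul_nonneg (Int.cast_nonneg (sum_divisors_moebius_mul_choose_nonneg m (j + 1))) (ha j)

theorem newtonSeries_pow_mul_one_sub_pow [CommRing R] (x : R) {n q : ℕ} (hqn : q ≤ n) :
    newtonSeries (fun j => x ^ (n - j) * (1 - x) ^ j) q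
      = ∑ i ∈ range (n + 1), x ^ i - ∑ i ∈ range (n - q + 1), x ^ i := by
  induction q with
  | zero => simp
  | succ q ih =>
    have hbinom : ∑ j ∈ range (q + 1), (q.choose j : R) * (x ^ (n - j) * (1 - x) ^ j)
        = x ^ (n - q) := by
      calc ∑ j ∈ range (q + 1), (q.choose j : R) * (x ^ (n - j) * (1 - x) ^ j)
          = x ^ (n - q) * ∑ j ∈ range (q + 1), (1 - x) ^ j * x ^ (q - j) * q.choose j := by
            rw [mul_sum]
            refine sum_congr rfl fun j hj => ?_
            rw [show n - j = n - q + (q - j) by simp at hj; omega, pow_add]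
            ring
        _ = x ^ (n - q) := by rw [← add_pow, sub_add_cancel, one_pow, mul_one]
    have hsucc : newtonSeries (fun j => x ^ (n - j) * (1 - x) ^ j) (q + 1)
        = x ^ (n - q) + newtonSeries (fun j => x ^ (n - j) * (1 - x) ^ j) q := by
      rw [newtonSeries_apply, newtonSeries_apply_of_le _ q.le_succ, ← hbinom, ← sum_add_distrib]
      refine sum_congr rfl fun j _ => ?_
      rw [Nat.choose_succ_succ', Nat.cast_add]
      ring
    have hnq : n - q = n - (q + 1) + 1 := by omega
    rw [hsucc, ih (by omega), hnq, sum_range_succ _ (n - (q + 1) + 1)]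
    ring

end newtonSeries

theorem mertens_cast {R : Type*} [Ring R] (N : ℕ) :
    (Mertens N : R) = ∑ m ∈ Icc 1 N, (μ : ArithmeticFunction R) m := by
  simp [Mertens, intCoe_apply]

theorem sum_Icc_mertens_div_mul {R : Type*} [CommRing R] (f : ArithmeticFunction R) (N : ℕ) :
    ∑ k ∈ Icc 1 N, (Mertens (N / k) : R) * f k = ∑ m ∈ Icc 1 N, (f * μ) m := by
  have h := sum_Ioc_mul_eq_sum_sum f μ N
  simp_rw [← Icc_add_one_left_eq_Ioc, zero_add] at h
  simp_rw [h, mertens_cast, mul_comm]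

theorem sum_Icc_mertens_div {R : Type*} [CommRing R] {N : ℕ} (hN : 1 ≤ N) :
    ∑ k ∈ Icc 1 N, (Mertens (N / k) : R) = 1 := by
  have h := sum_Icc_mertens_div_mul (ζ : ArithmeticFunction R) N
  rw [coe_zeta_mul_coe_moebius, sum_eq_single_of_mem 1 (by simp [hN]) fun m _ hm => one_apply_ne hm,
    one_one] at h
  rw [← h]
  refine sum_congr rfl fun k hk => ?_
  rw [natCoe_apply, zeta_apply_ne (by simp at hk; omega), Nat.cast_one, mul_one]

theorem geom_sum_sub_sum_mertens_mul_geom_sum {R : Type*} [CommRing R] (x : R) {N n : ℕ}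
    (hN : 1 ≤ N) (hNn : N ≤ n) :
    ∑ j ∈ range (n + 1), x ^ j
      - ∑ k ∈ Icc 1 N, (Mertens (N / k) : R) * ∑ j ∈ range (n - k + 1), x ^ j
        = ∑ m ∈ Icc 1 N, (newtonSeries (fun j => x ^ (n - j) * (1 - x) ^ j) * μ) m := by
  have htail : ∀ k ∈ Icc 1 N, ∑ j ∈ range (n - k + 1), x ^ j
      = ∑ j ∈ range (n + 1), x ^ j - newtonSeries (fun j => x ^ (n - j) * (1 - x) ^ j) k :=
    fun k hk => by
      rw [newtonSeries_pow_mul_one_sub_pow x (by simp at hk; omega)]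
      ring
  rw [sum_congr rfl fun k hk => congrArg _ (htail k hk)]
  simp_rw [mul_sub, sum_sub_distrib, ← sum_mul, sum_Icc_mertens_div hN, sum_Icc_mertens_div_mul]
  ring

theorem stmt2 (n : ℕ) (hn : 2 ≤ n) (lam : ℝ) (h0 : 0 ≤ lam) (h1 : lam ≤ 1) :
    (∑ j ∈ range (n + 1), lam ^ j
      - ∑ k ∈ Icc 1 (n - 1), (Mertens ((n - 1) / k) : ℝ) * ∑ j ∈ range (n - k + 1), lam ^ j ≥ 0)
    ∧ ((∑ j ∈ range (n + 1), lam ^ j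
      - ∑ k ∈ Icc 1 (n - 1), (Mertens ((n - 1) / k) : ℝ) * ∑ j ∈ range (n - k + 1), lam ^ j = 0)
        ↔ lam = 0) := by
  have hN : 1 ≤ n - 1 := by omega
  have hE := geom_sum_sub_sum_mertens_mul_geom_sum lam hN (Nat.sub_le n 1)
  set T := newtonSeries fun j => lam ^ (n - j) * (1 - lam) ^ j
  have hnonneg : ∀ m, 0 ≤ (T * μ) m :=
    newtonSeries_mul_moebius_nonneg fun j => by have := sub_nonneg.2 h1; positivity
  have hlower : lam ^ n ≤ ∑ m ∈ Icc 1 (n - 1), (T * μ) m := by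
    have hT1 : (T * μ) 1 = lam ^ n := by simp [T, newtonSeries_apply]
    exact hT1 ▸ single_le_sum (fun m _ => hnonneg m) (by simp [hN])
  refine ⟨hE ▸ (pow_nonneg h0 n).trans hlower, fun hzero => ?_, fun hlam => ?_⟩
  · rw [hE] at hzero
    exact pow_eq_zero_iff (by omega) |>.1 (le_antisymm (hzero ▸ hlower) (pow_nonneg h0 n))
  · subst hlam
    simp [sum_Icc_mertens_div (R := ℝ) hN]
end

section
/- For every integer n ≥ 2 and every real λ ∈ [0,1], the inequality ∑_{j=0}^{n} λ^j − ∑_{k=1}^{n−1} M(⌊(n−1)/k⌋)·(∑_{j=0}^{n−k} λ^j) ≥ λ^n holds. -/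
open Finset Real

/-
Put `u k = ∑_{j<k} λ^j` and `N = n - 1`. Expanding `M(N/k)` and grouping the pairs `(k, d)`
by `m = k d` turns the subtracted sum into `∑_{m ≤ N} ∑_{d ∣ m} μ(d) u(n + 1 - m/d)`. The term
`m = 1` is `u n`; for `m ≥ 2` the sum `∑_{d ∣ m} μ(d)` vanishes, so the term is
`λ^{n+1-m} ∑_{d ∣ m} μ(d) u(m - m/d)`, and multiplying by `1 - λ` turns this last sum into
`-λ^m ∑_{d ∣ m} μ(d) x^{m/d}` with `x = 1/λ`. That necklace polynomial is nonnegative for real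
`x ≥ 1`: by inclusion–exclusion over the prime factors of `m` it is an iterated difference
`f y - f (y/p)` of `f y = x^y`, and such differences stay nonnegative and increasing on `y ≥ 0`.
The endpoints `λ = 0, 1` follow by continuity.
-/

open ArithmeticFunction
open scoped ArithmeticFunction.Moebius

/-- The weight `(∏ T)⁻¹ ^ s` makes the family closed under `∂/∂y`, which raises `s` by one. -/
noncomputable def inclExclRpow (P : Finset ℕ) (s : ℕ) (x y : ℝ) : ℝ :=
  ∑ T ∈ P.powerset, (-1) ^ #T * ((∏ p ∈ T, (p : ℝ))⁻¹) ^ s * x ^ (y / ∏ p ∈ T, (p : ℝ))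

theorem inclExclRpow_insert {a : ℕ} {Q : Finset ℕ} (ha : a ∉ Q) (s : ℕ) (x y : ℝ) :
    inclExclRpow (insert a Q) s x y
      = inclExclRpow Q s x y - ((a : ℝ)⁻¹) ^ s * inclExclRpow Q s x (y / a) := by
  unfold inclExclRpow
  rw [sum_powerset_insert ha, mul_sum, sub_eq_add_neg, ← sum_neg_distrib]
  congr 1
  refine sum_congr rfl fun T hT => ?_
  have haT : a ∉ T := fun h => ha (mem_powerset.mp hT h)
  rw [prod_insert haT, card_insert_of_notMem haT, div_div, pow_succ, mul_inv, mul_pow]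
  ring

theorem hasDerivAt_inclExclRpow (P : Finset ℕ) (s : ℕ) {x : ℝ} (hx : 0 < x) (y : ℝ) :
    HasDerivAt (inclExclRpow P s x) (log x * inclExclRpow P (s + 1) x y) y := by
  unfold inclExclRpow
  rw [mul_sum]
  refine HasDerivAt.fun_sum fun T _ => ?_
  have h := (((hasDerivAt_id y).div_const (∏ p ∈ T, (p : ℝ))).const_rpow hx).const_mul
    ((-1) ^ #T * ((∏ p ∈ T, (p : ℝ))⁻¹) ^ s)
  refine h.congr_deriv ?_
  simp only [id_eq]
  ring

theorem inclExclRpow_nonneg {P : Finset ℕ} (hP : ∀ p ∈ P, 0 < p) {x : ℝ} (hx : 1 ≤ x) (s : ℕ)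
    {y : ℝ} (hy : 0 ≤ y) : 0 ≤ inclExclRpow P s x y := by
  induction P using Finset.induction_on generalizing s y with
  | empty => simp [inclExclRpow, rpow_nonneg (zero_le_one.trans hx)]
  | @insert a Q ha ih =>
    have hQ : ∀ p ∈ Q, 0 < p := fun p hp => hP p (mem_insert_of_mem hp)
    have ha1 : (1 : ℝ) ≤ a := by exact_mod_cast hP a (mem_insert_self a Q)
    have hya : 0 ≤ y / a := div_nonneg hy (by positivity)
    have hmono : MonotoneOn (inclExclRpow Q s x) (Set.Ici 0) :=
      monotoneOn_of_hasDerivWithinAt_nonneg (convex_Ici 0)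
        (fun y _ => (hasDerivAt_inclExclRpow Q s (by linarith) y).continuousAt.continuousWithinAt)
        (fun y _ => (hasDerivAt_inclExclRpow Q s (by linarith) y).hasDerivWithinAt)
        (fun y hy => mul_nonneg (log_nonneg hx)
          (ih hQ (s + 1) (le_of_lt (by simpa using hy))))
    rw [inclExclRpow_insert ha]
    have h1 : inclExclRpow Q s x (y / a) ≤ inclExclRpow Q s x y := hmono hya hy (div_le_self hy ha1)
    have h2 : 0 ≤ inclExclRpow Q s x (y / a) := ih hQ s hya
    have h3 : ((a : ℝ)⁻¹) ^ s ≤ 1 := pow_le_one₀ (by positivity) (inv_le_one_of_one_le₀ ha1)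
    nlinarith

theorem sum_divisors_moebius_mul_eq_sum_powerset {R : Type*} [CommRing R] {m : ℕ} (hm : m ≠ 0)
    (f : ℕ → R) :
    ∑ d ∈ m.divisors, (μ d : R) * f d
      = ∑ T ∈ m.primeFactors.powerset, (-1) ^ #T * f (∏ p ∈ T, p) := by
  rw [← sum_filter_of_ne fun d _ hd =>
      moebius_ne_zero_iff_squarefree.mp fun h => hd (by rw [h, Int.cast_zero, zero_mul]),
    Nat.sum_divisors_filter_squarefree hm, Nat.factors_eq]
  refine sum_congr rfl fun T hT => ?_
  have hprime : ∀ p ∈ T, p.Prime := fun p hp =>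
    Nat.prime_of_mem_primeFactors (mem_powerset.mp hT hp)
  rw [show T.val.prod = ∏ p ∈ T, p from prod_val T,
    isMultiplicative_moebius.map_prod_of_subset_primeFactors _ _ (mem_powerset.mp hT),
    prod_congr rfl fun p hp => moebius_apply_prime (hprime p hp)]
  simp

theorem sum_divisors_moebius_eq_zero {R : Type*} [Ring R] {m : ℕ} (hm : m ≠ 1) :
    ∑ d ∈ m.divisors, (μ d : R) = 0 := by
  simpa [hm] using (coe_mul_zeta_apply (f := (μ : ArithmeticFunction R)) (x := m)).symm

theorem sum_divisors_moebius_mul_pow_div_nonneg {m : ℕ} (hm : m ≠ 0) {x : ℝ} (hx : 1 ≤ x) :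
    0 ≤ ∑ d ∈ m.divisors, (μ d : ℝ) * x ^ (m / d) := by
  rw [sum_divisors_moebius_mul_eq_sum_powerset hm]
  convert inclExclRpow_nonneg (fun p hp => (Nat.prime_of_mem_primeFactors hp).pos) hx 0
    (Nat.cast_nonneg (α := ℝ) m) using 1
  refine sum_congr rfl fun T hT => ?_
  have hdvd : ∏ p ∈ T, p ∣ m :=
    (prod_dvd_prod_of_subset _ _ _ (mem_powerset.mp hT)).trans m.prod_primeFactors_dvd
  rw [pow_zero, mul_one, ← Nat.cast_prod, ← Nat.cast_div_charZero hdvd, rpow_natCast]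

theorem sum_divisors_moebius_mul_geom_sum_nonpos {m : ℕ} (hm : 1 < m) {t : ℝ}
    (ht : t ∈ Set.Icc 0 1) : ∑ d ∈ m.divisors, (μ d : ℝ) * ∑ i ∈ range (m - m / d), t ^ i ≤ 0 := by
  suffices Set.Ioo 0 1 ⊆
      {t : ℝ | ∑ d ∈ m.divisors, (μ d : ℝ) * ∑ i ∈ range (m - m / d), t ^ i ≤ 0} by
    rw [← closure_Ioo zero_ne_one] at ht
    exact (isClosed_le (by fun_prop) continuous_const).closure_subset_iff.mpr this ht
  rintro s ⟨hs0, hs1⟩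
  have key : (1 - s) * ∑ d ∈ m.divisors, (μ d : ℝ) * ∑ i ∈ range (m - m / d), s ^ i
      = -(s ^ m * ∑ d ∈ m.divisors, (μ d : ℝ) * s⁻¹ ^ (m / d)) :=
    calc (1 - s) * ∑ d ∈ m.divisors, (μ d : ℝ) * ∑ i ∈ range (m - m / d), s ^ i
        = ∑ d ∈ m.divisors, (μ d : ℝ) - ∑ d ∈ m.divisors, (μ d : ℝ) * s ^ (m - m / d) := by
          rw [mul_sum, ← sum_sub_distrib]
          exact sum_congr rfl fun d _ => by rw [mul_left_comm, mul_neg_geom_sum, mul_one_sub]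
      _ = -(s ^ m * ∑ d ∈ m.divisors, (μ d : ℝ) * s⁻¹ ^ (m / d)) := by
          rw [sum_divisors_moebius_eq_zero hm.ne', zero_sub, mul_sum]
          exact congrArg _ (sum_congr rfl fun d _ => by
            rw [pow_sub₀ s hs0.ne' (Nat.div_le_self m d), inv_pow]; ring)
  have hnecklace := sum_divisors_moebius_mul_pow_div_nonneg (by omega : m ≠ 0)
    ((one_le_inv₀ hs0).mpr hs1.le)
  have : (1 - s) * ∑ d ∈ m.divisors, (μ d : ℝ) * ∑ i ∈ range (m - m / d), s ^ i ≤ 0 :=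
    key ▸ neg_nonpos.mpr (mul_nonneg (pow_nonneg hs0.le m) hnecklace)
  exact nonpos_of_mul_nonpos_right this (by linarith)

theorem sum_divisors_moebius_mul_geom_sum_add_nonpos {m : ℕ} (hm : 1 < m) (c : ℕ) {t : ℝ}
    (ht : t ∈ Set.Icc 0 1) :
    ∑ d ∈ m.divisors, (μ d : ℝ) * ∑ i ∈ range (c + (m - m / d)), t ^ i ≤ 0 := by
  have hsplit : ∀ d ∈ m.divisors, (μ d : ℝ) * ∑ i ∈ range (c + (m - m / d)), t ^ i
      = (μ d : ℝ) * ∑ i ∈ range c, t ^ i + t ^ c * ((μ d : ℝ) * ∑ i ∈ range (m - m / d), t ^ i) :=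
    fun d _ => by simp_rw [sum_range_add, pow_add, ← mul_sum]; ring
  rw [sum_congr rfl hsplit, sum_add_distrib, ← sum_mul, sum_divisors_moebius_eq_zero hm.ne',
    zero_mul, zero_add, ← mul_sum]
  exact mul_nonpos_of_nonneg_of_nonpos (pow_nonneg ht.1 c)
    (sum_divisors_moebius_mul_geom_sum_nonpos hm ht)

theorem sum_Icc_mul_sum_Icc_div_eq_sum_divisors {R : Type*} [Semiring R] (f : ℕ → R)
    (g : ArithmeticFunction R) (N : ℕ) :
    ∑ k ∈ Icc 1 N, f k * ∑ d ∈ Icc 1 (N / k), g d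
      = ∑ m ∈ Icc 1 N, ∑ d ∈ m.divisors, f (m / d) * g d := by
  let f' : ArithmeticFunction R := ⟨fun k => if k = 0 then 0 else f k, if_pos rfl⟩
  have hIcc (a : ℕ) : Icc 1 a = Ioc 0 a := Icc_add_one_left_eq_Ioc 0 a
  have hf' : ∀ k ∈ Ioc 0 N, f' k = f k := fun k hk => if_neg (mem_Ioc.mp hk).1.ne'
  simp_rw [hIcc]
  rw [← sum_congr rfl fun k hk => congrArg (· * _) (hf' k hk), ← sum_Ioc_mul_eq_sum_sum]
  refine sum_congr rfl fun m _ => ?_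
  rw [mul_apply, Nat.sum_divisorsAntidiagonal' (f' · * g ·)]
  refine sum_congr rfl fun d hd => congrArg (· * g d) (if_neg ?_)
  exact (Nat.div_pos (Nat.divisor_le hd) (Nat.pos_of_mem_divisors hd)).ne'

theorem stmt3 (n : ℕ) (hn : 2 ≤ n) (lam : ℝ) (h0 : 0 ≤ lam) (h1 : lam ≤ 1) :
    ∑ j ∈ range (n + 1), lam ^ j
      - ∑ k ∈ Icc 1 (n - 1), (Mertens ((n - 1) / k) : ℝ) * ∑ j ∈ range (n - k + 1), lam ^ j
      ≥ lam ^ n := by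
  have hMertens (a : ℕ) : (Mertens a : ℝ) = ∑ d ∈ Icc 1 a, (μ : ArithmeticFunction ℝ) d := by
    simp [Mertens]
  have hrest : ∀ m ∈ Ioc 1 (n - 1),
      ∑ d ∈ m.divisors, (∑ j ∈ range (n - m / d + 1), lam ^ j) * (μ d : ℝ) ≤ 0 := by
    intro m hm
    obtain ⟨hm1, hmn⟩ := mem_Ioc.mp hm
    have hshift : ∀ d ∈ m.divisors, n - m / d + 1 = (n + 1 - m) + (m - m / d) :=
      fun d _ => by have := Nat.div_le_self m d; omega
    rw [sum_congr rfl fun d hd => by rw [hshift d hd, mul_comm]]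
    exact sum_divisors_moebius_mul_geom_sum_add_nonpos hm1 _ ⟨h0, h1⟩
  simp_rw [hMertens, mul_comm (∑ d ∈ Icc 1 _, _)]
  rw [sum_Icc_mul_sum_Icc_div_eq_sum_divisors, Icc_eq_cons_Ioc (by omega : 1 ≤ n - 1), sum_cons]
  simp only [intCoe_apply, Nat.divisors_one, sum_singleton, Nat.div_one, moebius_apply_one,
    Int.cast_one, mul_one, Nat.sub_add_cancel (by omega : 1 ≤ n)]
  rw [sum_range_succ]
  linarith [sum_nonpos hrest]
end

section
/- Let n ≥ 4 be an integer. For all j with n − ⌊(n−1)/2⌋ + 1 ≤ j ≤ n − ⌊(n−1)/3⌋, the coefficient d_j = ∑_{r=n−j+1}^{n−1} M(⌊(n−1)/r⌋) satisfies d_j = n − 1 − ⌊(n−1)/2⌋ ≥ (n−1)/2. -/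
/-! For `(n - 1) / 3 < r ≤ n - 1` the quotient `⌊(n - 1) / r⌋` is `1` or `2`, and
`M(1) = 1`, `M(2) = 0`, so `d_j` just counts the `r` in `((n - 1) / 2, n - 1]`. -/

open Finset Real

lemma mertens_one : Mertens 1 = 1 := by
  simp [Mertens]

lemma mertens_two : Mertens 2 = 0 := by
  have h : Finset.Icc 1 2 = ({1, 2} : Finset ℕ) := rfl
  simp [Mertens, h, ArithmeticFunction.moebius_apply_prime Nat.prime_two]

lemma div_eq_one_of_mem_Ioc_half {m r : ℕ} (hr : r ∈ Ioc (m / 2) m) : m / r = 1 := by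
  rw [mem_Ioc] at hr
  exact Nat.div_eq_of_lt_le (by omega) (by omega)

lemma div_eq_two_of_mem_Ioc_third_half {m r : ℕ} (hr : r ∈ Ioc (m / 3) (m / 2)) :
    m / r = 2 := by
  rw [mem_Ioc] at hr
  exact Nat.div_eq_of_lt_le (by omega) (by omega)

lemma sum_mertens_div_Ioc_half (m : ℕ) :
    ∑ r ∈ Ioc (m / 2) m, Mertens (m / r) = (m : ℤ) - (m / 2 : ℕ) := by
  rw [sum_congr rfl fun r hr => by rw [div_eq_one_of_mem_Ioc_half hr, mertens_one],
    sum_const, Nat.card_Ioc, nsmul_one, Nat.cast_sub (Nat.div_le_self m 2)]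

lemma sum_mertens_div_Ioc_third_half {m a : ℕ} (hlo : m / 3 ≤ a) :
    ∑ r ∈ Ioc a (m / 2), Mertens (m / r) = 0 :=
  sum_eq_zero fun r hr => by
    rw [div_eq_two_of_mem_Ioc_third_half (Ioc_subset_Ioc_left hlo hr), mertens_two]

lemma sum_mertens_div_Ioc {m a : ℕ} (hlo : m / 3 ≤ a) (hhi : a ≤ m / 2) :
    ∑ r ∈ Ioc a m, Mertens (m / r) = (m : ℤ) - (m / 2 : ℕ) := by
  rw [← sum_Ioc_consecutive _ hhi (Nat.div_le_self m 2), sum_mertens_div_Ioc_third_half hlo,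
    sum_mertens_div_Ioc_half, zero_add]

lemma half_le_sub_nat_half (m : ℕ) : (m : ℝ) / 2 ≤ m - (m / 2 : ℕ) := by
  have : ((m / 2 : ℕ) : ℝ) * 2 ≤ m := by exact_mod_cast Nat.div_mul_le_self m 2
  linarith

theorem stmt11_general (n : ℕ) (j : ℕ)
    (hj1 : n - (n - 1) / 2 + 1 ≤ j) (hj2 : j ≤ n - (n - 1) / 3) :
    ∑ r ∈ Icc (n - j + 1) (n - 1), Mertens ((n - 1) / r) = (n : ℤ) - 1 - ((n - 1) / 2 : ℕ)
    ∧ ((n : ℝ) - 1 - ((n - 1) / 2 : ℕ) ≥ ((n : ℝ) - 1) / 2) := by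
  have hn1 : 1 ≤ n := by omega
  have hsum := sum_mertens_div_Ioc (m := n - 1) (a := n - j) (by omega) (by omega)
  have hhalf := half_le_sub_nat_half (n - 1)
  rw [Nat.cast_sub hn1, Nat.cast_one] at hsum hhalf
  refine ⟨?_, hhalf⟩
  rwa [Icc_add_one_left_eq_Ioc]

theorem stmt11 (n : ℕ) (hn : 4 ≤ n) (j : ℕ)
    (hj1 : n - (n - 1) / 2 + 1 ≤ j) (hj2 : j ≤ n - (n - 1) / 3) :
    ∑ r ∈ Icc (n - j + 1) (n - 1), Mertens ((n - 1) / r) = (n : ℤ) - 1 - ((n - 1) / 2 : ℕ)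
    ∧ ((n : ℝ) - 1 - ((n - 1) / 2 : ℕ) ≥ ((n : ℝ) - 1) / 2) :=
  stmt11_general n j hj1 hj2
end

section
/- For every integer m ≥ 1, ∑_{a=1}^{m} φ(a) ≥ 3m²/π² − (1/2)·m·log m − m, where φ is Euler's totient function. -/
/-!
Since φ = μ ∗ id, interchanging summations gives ∑_{a ≤ m} φ(a) = ∑_{d ≤ m} μ(d) T(⌊m/d⌋) with
T(k) = k(k+1)/2. As |T(⌊x⌋) - x²/2| ≤ x/2 and |μ| ≤ 1, the d-th term is at least
μ(d) m²/(2d²) - m/(2d). The main terms add up to at least (m²/2)(6/π² - 1/m), because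
∑ μ(d)/d² = 1/ζ(2) = 6/π² and the tail is bounded by ∑_{d > m} 1/d² ≤ 1/m; the errors add up to
(m/2) H_m ≤ (m/2)(1 + log m).
-/

open Finset Real ArithmeticFunction Filter
open scoped ArithmeticFunction.Moebius LSeries.notation

theorem ArithmeticFunction.sum_Ioc_totient_eq_sum_moebius_mul {R : Type*} [Ring R] (N : ℕ) :
    ∑ n ∈ Ioc 0 N, (n.totient : R) =
      ∑ d ∈ Ioc 0 N, (μ d : R) * ∑ k ∈ Ioc 0 (N / d), (k : R) := by
  have hφ : ∀ n > 0, ∑ x ∈ n.divisorsAntidiagonal, (μ x.1 : R) * (x.2 : R) = n.totient :=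
    sum_eq_iff_sum_mul_moebius_eq.mp fun n _ ↦ by rw [← Nat.cast_sum, Nat.sum_totient]
  have hconv : ∀ n ∈ Ioc 0 N,
      (n.totient : R) = ((μ : ArithmeticFunction R) * ArithmeticFunction.id) n := by
    intro n hn
    rw [mul_apply, ← hφ n (mem_Ioc.mp hn).1]
    simp [intCoe_apply, natCoe_apply]
  rw [sum_congr rfl hconv, sum_Ioc_mul_eq_sum_sum]
  simp [intCoe_apply, natCoe_apply]

theorem hasSum_moebius_div_sq : HasSum (fun n : ℕ ↦ (μ n : ℝ) / n ^ 2) (6 / π ^ 2) := by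
  have hs : 1 < (2 : ℂ).re := by norm_num
  have hL : L ↗μ 2 = 6 / (π : ℂ) ^ 2 := by
    have h := LSeries_zeta_mul_Lseries_moebius hs
    rw [LSeries_zeta_eq_riemannZeta hs, riemannZeta_two] at h
    have hπ : (π : ℂ) ≠ 0 := by exact_mod_cast pi_ne_zero
    field_simp at h ⊢
    linear_combination h
  have h := (LSeriesSummable_moebius_iff.mpr hs).LSeriesHasSum
  rw [hL, LSeriesHasSum] at h
  rw [← Complex.hasSum_ofReal]
  convert h using 1
  · ext n
    rcases eq_or_ne n 0 with rfl | hn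
    · simp
    · rw [LSeries.term_of_ne_zero hn, Complex.cpow_ofNat]
      push_cast
      rfl
  · push_cast; rfl

theorem le_sum_range_add_inv_of_hasSum {f : ℕ → ℝ} {s : ℝ} (hf : HasSum f s) {m : ℕ}
    (hm : m ≠ 0) (hbound : ∀ n, m < n → f n ≤ ((n : ℝ) ^ 2)⁻¹) :
    s ≤ ∑ n ∈ range (m + 1), f n + (m : ℝ)⁻¹ := by
  refine le_of_tendsto' (hf.tendsto_sum_nat.comp (tendsto_add_atTop_nat (m + 1))) fun K ↦ ?_
  have htail : ∑ n ∈ Ioc m (K + m), f n ≤ (m : ℝ)⁻¹ :=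
    calc ∑ n ∈ Ioc m (K + m), f n ≤ ∑ n ∈ Ioc m (K + m), ((n : ℝ) ^ 2)⁻¹ :=
          sum_le_sum fun n hn ↦ hbound n (mem_Ioc.mp hn).1
      _ ≤ (m : ℝ)⁻¹ - ((K + m : ℕ) : ℝ)⁻¹ := sum_Ioc_inv_sq_le_sub hm (by omega)
      _ ≤ (m : ℝ)⁻¹ := sub_le_self _ (by positivity)
  simp only [Function.comp_apply]
  rw [← sum_range_add_sum_Ico _ (by omega : m + 1 ≤ K + (m + 1)), ← add_assoc,
    Ico_add_one_add_one_eq_Ioc]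
  linarith

theorem sum_Ioc_natCast (K : ℕ) : ∑ k ∈ Ioc 0 K, (k : ℝ) = K * (K + 1) / 2 := by
  induction K with
  | zero => simp
  | succ K ih =>
    rw [sum_Ioc_succ_top (Nat.zero_le K), ih]
    push_cast
    ring

theorem abs_sum_Ioc_floor_sub_sq_div_two_le {x : ℝ} (hx : 0 ≤ x) :
    |∑ k ∈ Ioc 0 ⌊x⌋₊, (k : ℝ) - x ^ 2 / 2| ≤ x / 2 := by
  have hle := Nat.floor_le hx
  have hlt := Nat.lt_floor_add_one x
  rw [sum_Ioc_natCast, abs_le]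
  constructor <;> nlinarith

theorem six_div_pi_sq_sub_inv_le_sum_moebius_div_sq {m : ℕ} (hm : m ≠ 0) :
    6 / π ^ 2 - (m : ℝ)⁻¹ ≤ ∑ d ∈ Ioc 0 m, (μ d : ℝ) / d ^ 2 := by
  have hbound (n : ℕ) : (μ n : ℝ) / n ^ 2 ≤ ((n : ℝ) ^ 2)⁻¹ := by
    rw [← one_div]
    gcongr
    exact_mod_cast (le_abs_self _).trans abs_moebius_le_one
  have h := le_sum_range_add_inv_of_hasSum hasSum_moebius_div_sq hm fun n _ ↦ hbound n
  rw [Nat.range_succ_eq_Icc_zero, Icc_eq_cons_Ioc (Nat.zero_le m), sum_cons] at h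
  simp only [Nat.cast_zero, zero_pow two_ne_zero, div_zero, zero_add] at h
  linarith

theorem sub_le_moebius_mul_sum_Ioc_div (m d : ℕ) :
    (m : ℝ) ^ 2 / 2 * ((μ d : ℝ) / d ^ 2) - m / (2 * d) ≤
      (μ d : ℝ) * ∑ k ∈ Ioc 0 (m / d), (k : ℝ) := by
  set x : ℝ := m / d
  have hfloor : ⌊x⌋₊ = m / d := Nat.floor_div_eq_div m d
  have hμ : |(μ d : ℝ)| ≤ 1 := by exact_mod_cast abs_moebius_le_one
  have herr := abs_sum_Ioc_floor_sub_sq_div_two_le (x := x) (by positivity)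
  rw [hfloor] at herr
  have hprod : |(μ d : ℝ) * (∑ k ∈ Ioc 0 (m / d), (k : ℝ) - x ^ 2 / 2)| ≤ x / 2 := by
    rw [abs_mul]
    exact (mul_le_of_le_one_left (abs_nonneg _) hμ).trans herr
  have hx : (m : ℝ) ^ 2 / 2 * ((μ d : ℝ) / d ^ 2) - m / (2 * d) =
      μ d * (x ^ 2 / 2) - x / 2 := by
    simp only [x]; ring
  rw [hx]
  linarith [neg_abs_le ((μ d : ℝ) * (∑ k ∈ Ioc 0 (m / d), (k : ℝ) - x ^ 2 / 2))]

theorem stmt13 (m : ℕ) (hm : 1 ≤ m) :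
    (∑ a ∈ Icc 1 m, (Nat.totient a : ℝ))
      ≥ 3 * m ^ 2 / π ^ 2 - (1 / 2) * m * Real.log m - m := by
  have hIoc : Icc 1 m = Ioc 0 m := Icc_add_one_left_eq_Ioc 0 m
  have hζ := six_div_pi_sq_sub_inv_le_sum_moebius_div_sq (m := m) (by omega)
  have hharm : ∑ d ∈ Ioc 0 m, (d : ℝ)⁻¹ ≤ 1 + Real.log m := by
    simpa [harmonic_eq_sum_Icc, hIoc] using harmonic_le_one_add_log m
  rw [hIoc, sum_Ioc_totient_eq_sum_moebius_mul, ge_iff_le]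
  calc 3 * (m : ℝ) ^ 2 / π ^ 2 - 1 / 2 * m * Real.log m - m
      = (m : ℝ) ^ 2 / 2 * (6 / π ^ 2 - (m : ℝ)⁻¹) - m / 2 * (1 + Real.log m) := by
        field_simp; ring
    _ ≤ (m : ℝ) ^ 2 / 2 * ∑ d ∈ Ioc 0 m, (μ d : ℝ) / d ^ 2 -
          m / 2 * ∑ d ∈ Ioc 0 m, (d : ℝ)⁻¹ := by gcongr
    _ = ∑ d ∈ Ioc 0 m, ((m : ℝ) ^ 2 / 2 * ((μ d : ℝ) / d ^ 2) - m / (2 * d)) := by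
        rw [sum_sub_distrib, mul_sum, mul_sum]
        congr 1
        refine sum_congr rfl fun d _ ↦ ?_
        field_simp
    _ ≤ _ := sum_le_sum fun d _ ↦ sub_le_moebius_mul_sum_Ioc_div m d
end

section
/- For every integer n ≥ 95, ∑_{j=1}^{n−1} d_j > 0, where d_j = ∑_{r=n−j+1}^{n−1} M(⌊(n−1)/r⌋). -/
/-!
Counting the indices `j` for which `r` occurs in the inner sum turns the double sum into
`∑_{r ≤ N} (r - 1) M(N / r)` with `N = n - 1`. Since `∑_{r ≤ N} f(r) M(N / r) = ∑_{k ≤ N} (f ∗ μ)(k)`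
for every arithmetic function `f`, and `id ∗ μ = φ`, `ζ ∗ μ = ε`, this equals `∑_{k ≤ N} φ(k) - 1`,
which is at least `N - 1 > 0`.
-/

open Finset Real

open scoped ArithmeticFunction.Moebius ArithmeticFunction.zeta

namespace ArithmeticFunction

def totient : ArithmeticFunction ℕ := ⟨Nat.totient, Nat.totient_zero⟩

theorem totient_apply {n : ℕ} : totient n = n.totient := rfl

theorem totient_mul_zeta : totient * ζ = ArithmeticFunction.id := by
  ext n
  rw [mul_zeta_apply, id_apply]
  exact n.sum_totient

theorem coe_id_mul_moebius : (ArithmeticFunction.id : ArithmeticFunction ℤ) * μ = totient := by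
  rw [← totient_mul_zeta, natCoe_mul, mul_assoc, coe_zeta_mul_moebius, mul_one]

theorem sum_Icc_mul_moebius_eq_sum_mul_mertens (f : ArithmeticFunction ℤ) (N : ℕ) :
    ∑ k ∈ Icc 1 N, (f * μ) k = ∑ r ∈ Icc 1 N, f r * Mertens (N / r) := by
  simpa only [Mertens, ← Icc_add_one_left_eq_Ioc, zero_add] using sum_Ioc_mul_eq_sum_sum f μ N

end ArithmeticFunction

open ArithmeticFunction

theorem sum_mertens_div_eq_one {N : ℕ} (hN : 0 < N) : ∑ r ∈ Icc 1 N, Mertens (N / r) = 1 := by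
  have h := sum_Icc_mul_moebius_eq_sum_mul_mertens ζ N
  rw [coe_zeta_mul_moebius] at h
  calc ∑ r ∈ Icc 1 N, Mertens (N / r)
      = ∑ r ∈ Icc 1 N, (ζ : ArithmeticFunction ℤ) r * Mertens (N / r) :=
        sum_congr rfl fun r hr => by simp [Nat.one_le_iff_ne_zero.mp (mem_Icc.mp hr).1]
    _ = 1 := by rw [← h, sum_congr rfl fun k _ => one_apply]; simpa using hN.ne'

theorem sum_mul_mertens_div_eq_sum_totient (N : ℕ) :
    ∑ r ∈ Icc 1 N, (r : ℤ) * Mertens (N / r) = ∑ k ∈ Icc 1 N, k.totient := by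
  have h := sum_Icc_mul_moebius_eq_sum_mul_mertens ArithmeticFunction.id N
  rw [coe_id_mul_moebius] at h
  simpa [totient_apply] using h.symm

theorem sum_Icc_sum_Icc_sub_add_one_eq_sum_nsmul {M : Type*} [AddCommMonoid M] (n : ℕ)
    (g : ℕ → M) :
    ∑ j ∈ Icc 1 (n - 1), ∑ r ∈ Icc (n - j + 1) (n - 1), g r
      = ∑ r ∈ Icc 1 (n - 1), (r - 1) • g r := by
  rw [sum_comm' (t' := Icc 1 (n - 1)) (s' := fun r => Icc (n - r + 1) (n - 1))]
  · refine sum_congr rfl fun r hr => ?_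
    rw [sum_const, Nat.card_Icc]
    congr 1
    simp only [mem_Icc] at hr
    omega
  · intro j r
    simp only [mem_Icc]
    omega

theorem stmt16 (n : ℕ) (hn : 95 ≤ n) :
    0 < ∑ j ∈ Icc 1 (n - 1), ∑ r ∈ Icc (n - j + 1) (n - 1), Mertens ((n - 1) / r) := by
  rw [sum_Icc_sum_Icc_sub_add_one_eq_sum_nsmul]
  set N := n - 1
  have hcast : ∀ r ∈ Icc 1 N, (r - 1) • Mertens (N / r) = ((r : ℤ) - 1) * Mertens (N / r) :=
    fun r hr => by rw [nsmul_eq_mul, Nat.cast_pred (mem_Icc.mp hr).1]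
  have htotient : N ≤ ∑ k ∈ Icc 1 N, k.totient := by
    simpa using card_nsmul_le_sum (Icc 1 N) Nat.totient 1
      fun k hk => Nat.totient_pos.mpr (mem_Icc.mp hk).1
  rw [sum_congr rfl hcast]
  simp only [sub_mul, one_mul, sum_sub_distrib, sum_mul_mertens_div_eq_sum_totient,
    sum_mertens_div_eq_one (by omega : 0 < N)]
  omega
end

section
/- For every integer n ≥ 95, the sum of |d_j| over those indices j with 9n/10 < j ≤ n − 1 and d_j < 0 is at most 0.342·n², where d_j = ∑_{r=n−j+1}^{n−1} M(⌊(n−1)/r⌋). -/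
open Finset Real

/-! With `m = n - 1` and `k = n - j`, exchanging the order of summation gives
`d_j = ∑_{s ≤ m} (⌊m/s⌋ - k)⁺ μ(s)`, so `|d_j| ≤ ∑_{s ≤ m} (⌊m/s⌋ - k)⁺`. The constraint `j > 9n/10`
means `1 ≤ k ≤ m/10`. Summed over these `k`, each `s ≤ 9` contributes at most `(m/10)·(m/s)`, and each
`s ≥ 10` at most `∑_{k ≥ 1} (⌊m/s⌋ - k)⁺ ≤ m²/(2s²)`; since `∑_{s ≥ 10} s⁻² ≤ 1/9`, the total is at most
`(H₉/10 + 1/18) m² < 0.3385 n²`. -/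

open ArithmeticFunction ArithmeticFunction.Moebius

lemma sum_Icc_mertens_div_eq (m k : ℕ) :
    ∑ r ∈ Icc (k + 1) m, Mertens (m / r) = ∑ s ∈ Icc 1 m, ((m / s - k : ℕ) : ℤ) * μ s := by
  unfold Mertens
  rw [sum_comm' (t' := Icc 1 m) (s' := fun s => Icc (k + 1) (m / s))]
  · simp_rw [sum_const, Nat.card_Icc, nsmul_eq_mul, Nat.add_sub_add_right]
  · have hswap {r s : ℕ} (hr : 0 < r) (hs : 0 < s) : r ≤ m / s ↔ s ≤ m / r := by
      rw [Nat.le_div_iff_mul_le hs, Nat.le_div_iff_mul_le hr, mul_comm]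
    intro r s
    simp only [mem_Icc]
    constructor
    · rintro ⟨⟨hkr, -⟩, hs, hsr⟩
      exact ⟨⟨hkr, (hswap (by omega) hs).mpr hsr⟩, hs, hsr.trans (Nat.div_le_self m r)⟩
    · rintro ⟨⟨hkr, hrs⟩, hs, -⟩
      exact ⟨⟨hkr, hrs.trans (Nat.div_le_self m s)⟩, hs, (hswap (by omega) hs).mp hrs⟩

lemma abs_sum_Icc_mertens_div_le (m k : ℕ) :
    |∑ r ∈ Icc (k + 1) m, Mertens (m / r)| ≤ ((∑ s ∈ Icc 1 m, (m / s - k) : ℕ) : ℤ) := by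
  rw [sum_Icc_mertens_div_eq, Nat.cast_sum]
  refine (abs_sum_le_sum_abs _ _).trans (sum_le_sum fun s _ => ?_)
  rw [abs_mul, Nat.abs_cast]
  exact mul_le_of_le_one_right (Nat.cast_nonneg _) abs_moebius_le_one

lemma sum_Icc_tsub_le_sq_div_two (q K : ℕ) : ((∑ k ∈ Icc 1 K, (q - k) : ℕ) : ℝ) ≤ q ^ 2 / 2 := by
  have hshift : ∑ k ∈ Icc 1 K, (q - k) = ∑ i ∈ range K, (q - 1 - i) := by
    rw [← Ico_add_one_right_eq_Icc, sum_Ico_eq_sum_range]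
    refine sum_congr (by simp) fun i _ => by omega
  have hle : ∑ i ∈ range K, (q - 1 - i) ≤ ∑ i ∈ range q, (q - 1 - i) :=
    sum_le_sum_of_ne_zero fun i _ hi => mem_range.mpr (by omega)
  have hgauss : (∑ i ∈ range q, (q - 1 - i)) * 2 ≤ q ^ 2 := by
    rw [sum_range_reflect (fun i => i) q, sum_range_id_mul_two, sq]
    exact Nat.mul_le_mul_left _ (Nat.sub_le _ _)
  rw [le_div_iff₀ two_pos]
  exact_mod_cast hshift ▸ (Nat.mul_le_mul_right 2 hle).trans hgauss

lemma sum_Ioc_inv_sq_le (t m : ℕ) (ht : t ≠ 0) : ∑ i ∈ Ioc t m, ((i : ℝ) ^ 2)⁻¹ ≤ (t : ℝ)⁻¹ := by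
  rcases le_total t m with h | h
  · exact (sum_Ioc_inv_sq_le_sub ht h).trans (sub_le_self _ (by positivity))
  · simp [Ioc_eq_empty_of_le h]

lemma harmonic_nine : harmonic 9 = 7129 / 2520 := by
  norm_num [harmonic, sum_range_succ]

lemma sum_filter_le_sum_div_tsub_le (m K t : ℕ) :
    ((∑ s ∈ (Icc 1 m).filter (· ≤ t), ∑ k ∈ Icc 1 K, (m / s - k) : ℕ) : ℝ) ≤
      K * m * harmonic t := by
  have hs : ∀ s ∈ (Icc 1 m).filter (· ≤ t),
      ((∑ k ∈ Icc 1 K, (m / s - k) : ℕ) : ℝ) ≤ K * m * (s : ℝ)⁻¹ := by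
    intro s _
    calc ((∑ k ∈ Icc 1 K, (m / s - k) : ℕ) : ℝ) ≤ ((∑ k ∈ Icc 1 K, m / s : ℕ) : ℝ) := by
          exact_mod_cast sum_le_sum fun k _ => Nat.sub_le _ _
      _ ≤ K * m * (s : ℝ)⁻¹ := by
          rw [sum_const, Nat.card_Icc, smul_eq_mul, Nat.cast_mul, mul_assoc, ← div_eq_mul_inv]
          gcongr
          · simp
          · exact Nat.cast_div_le
  rw [Nat.cast_sum]
  simp_rw [harmonic_eq_sum_Icc, Rat.cast_sum, Rat.cast_inv, Rat.cast_natCast, mul_sum]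
  refine (sum_le_sum hs).trans (sum_le_sum_of_subset_of_nonneg ?_ fun _ _ _ => by positivity)
  intro s
  simp only [mem_filter, mem_Icc]
  omega

lemma sum_Ioc_sum_div_tsub_le (m K t : ℕ) (ht : t ≠ 0) :
    ((∑ s ∈ Ioc t m, ∑ k ∈ Icc 1 K, (m / s - k) : ℕ) : ℝ) ≤ m ^ 2 / (2 * t) := by
  have hs : ∀ s ∈ Ioc t m,
      ((∑ k ∈ Icc 1 K, (m / s - k) : ℕ) : ℝ) ≤ m ^ 2 / 2 * ((s : ℝ) ^ 2)⁻¹ := by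
    intro s _
    calc ((∑ k ∈ Icc 1 K, (m / s - k) : ℕ) : ℝ) ≤ ((m / s : ℕ) : ℝ) ^ 2 / 2 :=
          sum_Icc_tsub_le_sq_div_two _ _
      _ ≤ ((m : ℝ) / s) ^ 2 / 2 := by gcongr; exact Nat.cast_div_le
      _ = m ^ 2 / 2 * ((s : ℝ) ^ 2)⁻¹ := by ring
  rw [Nat.cast_sum]
  calc _ ≤ ∑ s ∈ Ioc t m, (m : ℝ) ^ 2 / 2 * ((s : ℝ) ^ 2)⁻¹ := sum_le_sum hs
    _ ≤ m ^ 2 / 2 * (t : ℝ)⁻¹ := by rw [← mul_sum]; gcongr; exact sum_Ioc_inv_sq_le t m ht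
    _ = m ^ 2 / (2 * t) := by ring

lemma sum_sum_div_tsub_le (m K t : ℕ) (ht : t ≠ 0) :
    ((∑ k ∈ Icc 1 K, ∑ s ∈ Icc 1 m, (m / s - k) : ℕ) : ℝ) ≤
      K * m * harmonic t + m ^ 2 / (2 * t) := by
  have hfilter : (Icc 1 m).filter (¬ · ≤ t) = Ioc t m := by
    ext s
    simp only [mem_filter, mem_Icc, mem_Ioc]
    omega
  rw [sum_comm, ← sum_filter_add_sum_filter_not _ (· ≤ t), hfilter, Nat.cast_add]
  exact add_le_add (sum_filter_le_sum_div_tsub_le m K t) (sum_Ioc_sum_div_tsub_le m K t ht)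

theorem stmt18_general (n : ℕ) :
    ∑ j ∈ (Icc 1 (n - 1)).filter
        (fun j : ℕ => 9 * (n : ℝ) / 10 < (j : ℝ) ∧
          (∑ r ∈ Icc (n - j + 1) (n - 1), Mertens ((n - 1) / r)) < 0),
      |((∑ r ∈ Icc (n - j + 1) (n - 1), Mertens ((n - 1) / r) : ℤ) : ℝ)|
      ≤ 0.342 * (n : ℝ) ^ 2 := by
  set m := n - 1
  set K := m / 10
  set B : ℕ → ℝ := fun k => ((∑ s ∈ Icc 1 m, (m / s - k) : ℕ) : ℝ)
  have hinj : Set.InjOn (n - ·) (Icc 1 K) := by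
    intro a ha b hb hab
    simp only [coe_Icc, Set.mem_Icc] at ha hb hab
    omega
  have hK : (K : ℝ) ≤ m / 10 := Nat.cast_div_le
  have hm : (m : ℝ) ≤ n := by exact_mod_cast Nat.sub_le n 1
  calc _ ≤ ∑ j ∈ _, B (n - j) := sum_le_sum fun j _ => by
          simp only [B, ← Int.cast_abs]
          exact_mod_cast abs_sum_Icc_mertens_div_le m (n - j)
    _ ≤ ∑ j ∈ (Icc 1 K).image (n - ·), B (n - j) := by
        refine sum_le_sum_of_subset_of_nonneg (fun j hj => ?_) fun _ _ _ => Nat.cast_nonneg _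
        simp only [mem_filter, mem_Icc] at hj
        have h10 : 9 * n < j * 10 := by exact_mod_cast (div_lt_iff₀ (by norm_num)).mp hj.2.1
        refine mem_image.mpr ⟨n - j, mem_Icc.mpr ⟨by omega, ?_⟩, by omega⟩
        exact (Nat.le_div_iff_mul_le (by norm_num)).mpr (by omega)
    _ = ∑ k ∈ Icc 1 K, B k := by
        rw [sum_image hinj]
        refine sum_congr rfl fun k hk => ?_
        rw [Nat.sub_sub_self (by simp only [mem_Icc] at hk; omega)]
    _ ≤ K * m * harmonic 9 + m ^ 2 / (2 * 9) := by
        simpa [B] using sum_sum_div_tsub_le m K 9 (by norm_num)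
    _ ≤ 0.342 * (n : ℝ) ^ 2 := by
        rw [harmonic_nine]
        nlinarith [sq_nonneg (m : ℝ), hK, hm]

theorem stmt18 (n : ℕ) (hn : 95 ≤ n) :
    ∑ j ∈ (Icc 1 (n - 1)).filter
        (fun j : ℕ => 9 * (n : ℝ) / 10 < (j : ℝ) ∧
          (∑ r ∈ Icc (n - j + 1) (n - 1), Mertens ((n - 1) / r)) < 0),
      |((∑ r ∈ Icc (n - j + 1) (n - 1), Mertens ((n - 1) / r) : ℤ) : ℝ)|
      ≤ 0.342 * (n : ℝ) ^ 2 :=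
  stmt18_general n
end
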